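/- Let k ≥ 1 and let ℓ and m be disjoint k-subsets. Then ℓ and m are noncrossing if and only if α(ℓ,m) + β(ℓ,m) = k. -/
import Mathlib


/-- `α(ℓ,m)`: the largest `p ∈ {1,…,k}` such that `ℓ i ≤ m j` for all `1 ≤ i,j ≤ k`
with `j − i = k − p`, and `0` if no such `p` exists. -/
noncomputable def kAlpha (k : ℕ) (ℓ m : Fin k → ℤ) : ℕ :=
  sSup {p : ℕ | 1 ≤ p ∧ p ≤ k ∧
    ∀ i j : Fin k, (j.val : ℤ) - (i.val : ℤ) = (k : ℤ) - (p : ℤ) → ℓ i ≤ m j}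

/-- `β(ℓ,m)`: the largest `p ∈ {1,…,k}` such that `ℓ i ≥ m j` for all `1 ≤ i,j ≤ k`
with `i − j = k − p`, and `0` if no such `p` exists. -/
noncomputable def kBeta (k : ℕ) (ℓ m : Fin k → ℤ) : ℕ :=
  sSup {p : ℕ | 1 ≤ p ∧ p ≤ k ∧
    ∀ i j : Fin k, (i.val : ℤ) - (j.val : ℤ) = (k : ℤ) - (p : ℤ) → m j ≤ ℓ i}

/-- Two `k`-subsets `ℓ` and `m` cross if there exist `i₁, i₂` in the set of values
of `ℓ` not values of `m`, and `j₁, j₂` in the set of values of `m` not values of `ℓ`,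
with `i₁ < j₁ < i₂ < j₂` or `j₁ < i₁ < j₂ < i₂`. -/
def Crossing (k : ℕ) (ℓ m : Fin k → ℤ) : Prop :=
  ∃ i₁ i₂ j₁ j₂ : ℤ,
    i₁ ∈ Set.range ℓ \ Set.range m ∧ i₂ ∈ Set.range ℓ \ Set.range m ∧
    j₁ ∈ Set.range m \ Set.range ℓ ∧ j₂ ∈ Set.range m \ Set.range ℓ ∧
    ((i₁ < j₁ ∧ j₁ < i₂ ∧ i₂ < j₂) ∨ (j₁ < i₁ ∧ i₁ < j₂ ∧ j₂ < i₂))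

namespace NCAux

variable {k : ℕ} {ℓ m : Fin k → ℤ}

/-- number of values of `ℓ` below `m j`. -/
def cnt (ℓ m : Fin k → ℤ) (j : Fin k) : ℕ :=
  (Finset.univ.filter fun i => ℓ i < m j).card

lemma cnt_le (j : Fin k) : cnt ℓ m j ≤ k := by
  classical
  have h := Finset.card_filter_le (Finset.univ : Finset (Fin k)) (fun i => ℓ i < m j)
  simpa [cnt] using h

lemma cnt_mono (hm : StrictMono m) {j₁ j₂ : Fin k} (h : j₁ ≤ j₂) :
    cnt ℓ m j₁ ≤ cnt ℓ m j₂ := by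
  classical
  apply Finset.card_le_card
  intro a ha
  simp only [Finset.mem_filter, Finset.mem_univ, true_and] at ha ⊢
  exact lt_of_lt_of_le ha (hm.monotone h)

lemma lt_cnt_iff (hℓ : StrictMono ℓ) (i j : Fin k) :
    ℓ i < m j ↔ i.val < cnt ℓ m j := by
  classical
  constructor
  · intro h
    have hsub : Finset.Iic i ⊆ Finset.univ.filter fun i' => ℓ i' < m j := by
      intro a ha
      simp only [Finset.mem_Iic] at ha
      simp only [Finset.mem_filter, Finset.mem_univ, true_and]
      exact lt_of_le_of_lt (hℓ.monotone ha) h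
    have hcard := Finset.card_le_card hsub
    rw [Fin.card_Iic] at hcard
    exact hcard
  · intro h
    by_contra hn
    have hsub : (Finset.univ.filter fun i' => ℓ i' < m j) ⊆ Finset.Iio i := by
      intro a ha
      simp only [Finset.mem_filter, Finset.mem_univ, true_and] at ha
      simp only [Finset.mem_Iio]
      by_contra hai
      exact hn (lt_of_le_of_lt (hℓ.monotone (not_lt.1 hai)) ha)
    have hcard := Finset.card_le_card hsub
    rw [Fin.card_Iio] at hcard
    have : cnt ℓ m j ≤ i.val := hcard
    omega

lemma cnt_le_iff (hℓ : StrictMono ℓ) (hd : ∀ i j, ℓ i ≠ m j) (j i : Fin k) :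
    m j < ℓ i ↔ cnt ℓ m j ≤ i.val := by
  have h1 := lt_cnt_iff (m := m) hℓ i j
  constructor
  · intro h
    by_contra hc
    push_neg at hc
    exact absurd (h1.mpr hc) (not_lt.mpr h.le)
  · intro h
    rcases lt_trichotomy (m j) (ℓ i) with h' | h' | h'
    · exact h'
    · exact absurd h'.symm (hd i j)
    · have := h1.mp h'
      omega

/-- `dA = max_j (j+1 - c j)` (truncated subtraction). -/
def dA (ℓ m : Fin k → ℤ) : ℕ :=
  Finset.univ.sup fun j : Fin k => (j.val + 1) - cnt ℓ m j

/-- `dB = max_j (c j - j)` (truncated subtraction). -/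
def dB (ℓ m : Fin k → ℤ) : ℕ :=
  Finset.univ.sup fun j : Fin k => cnt ℓ m j - j.val

lemma le_dA (j : Fin k) : (j.val + 1) - cnt ℓ m j ≤ dA ℓ m := by
  unfold dA
  exact Finset.le_sup (f := fun j : Fin k => (j.val + 1) - cnt ℓ m j) (Finset.mem_univ j)

lemma le_dB (j : Fin k) : cnt ℓ m j - j.val ≤ dB ℓ m := by
  unfold dB
  exact Finset.le_sup (f := fun j : Fin k => cnt ℓ m j - j.val) (Finset.mem_univ j)

lemma exists_dA (hk : 1 ≤ k) : ∃ j : Fin k, dA ℓ m = (j.val + 1) - cnt ℓ m j := by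
  have hne : (Finset.univ : Finset (Fin k)).Nonempty := ⟨⟨0, hk⟩, Finset.mem_univ _⟩
  obtain ⟨j, -, hj⟩ := Finset.exists_mem_eq_sup Finset.univ hne
    (fun j : Fin k => (j.val + 1) - cnt ℓ m j)
  exact ⟨j, by rw [dA, hj]⟩

lemma exists_dB (hk : 1 ≤ k) : ∃ j : Fin k, dB ℓ m = cnt ℓ m j - j.val := by
  have hne : (Finset.univ : Finset (Fin k)).Nonempty := ⟨⟨0, hk⟩, Finset.mem_univ _⟩
  obtain ⟨j, -, hj⟩ := Finset.exists_mem_eq_sup Finset.univ hne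
    (fun j : Fin k => cnt ℓ m j - j.val)
  exact ⟨j, by rw [dB, hj]⟩

lemma dA_le : dA ℓ m ≤ k :=
  Finset.sup_le fun j _ => by have := j.isLt; omega

lemma dB_le : dB ℓ m ≤ k :=
  Finset.sup_le fun j _ => by have := cnt_le (ℓ := ℓ) (m := m) j; omega

lemma kAlpha_eq (hℓ : StrictMono ℓ) (hd : ∀ i j, ℓ i ≠ m j) :
    kAlpha k ℓ m = k - dA ℓ m := by
  have hAk : dA ℓ m ≤ k := dA_le
  have hset : {p : ℕ | 1 ≤ p ∧ p ≤ k ∧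
      ∀ i j : Fin k, (j.val : ℤ) - (i.val : ℤ) = (k : ℤ) - (p : ℤ) → ℓ i ≤ m j}
      = Set.Icc 1 (k - dA ℓ m) := by
    ext p
    simp only [Set.mem_setOf_eq, Set.mem_Icc]
    constructor
    · rintro ⟨h1, hpk, hcond⟩
      refine ⟨h1, ?_⟩
      have hdle : dA ℓ m ≤ k - p := by
        apply Finset.sup_le
        intro j _
        have hjk := j.isLt
        by_cases hj : j.val + p < k
        · omega
        · have hik : j.val - (k - p) < k := by omega
          have hle := hcond ⟨j.val - (k - p), hik⟩ j
            (by show (j.val : ℤ) - ((j.val - (k - p) : ℕ) : ℤ) = (k : ℤ) - (p : ℤ); omega)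
          have hlt : ℓ ⟨j.val - (k - p), hik⟩ < m j :=
            lt_of_le_of_ne hle (hd _ j)
          have hfin : j.val - (k - p) < cnt ℓ m j := (lt_cnt_iff hℓ _ j).mp hlt
          omega
      omega
    · rintro ⟨h1, hp⟩
      refine ⟨h1, by omega, ?_⟩
      intro i j heq
      have hje : j.val + p = i.val + k := by omega
      have hd1 : (j.val + 1) - cnt ℓ m j ≤ dA ℓ m := le_dA j
      have hic : i.val < cnt ℓ m j := by omega
      exact ((lt_cnt_iff hℓ i j).mpr hic).le
  rw [kAlpha, hset]
  rcases Nat.eq_zero_or_pos (k - dA ℓ m) with h | h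
  · rw [h, Set.Icc_eq_empty (by omega)]
    simpa using (csSup_empty : sSup (∅ : Set ℕ) = ⊥)
  · exact csSup_Icc h

lemma kBeta_eq (hℓ : StrictMono ℓ) (hd : ∀ i j, ℓ i ≠ m j) :
    kBeta k ℓ m = k - dB ℓ m := by
  have hBk : dB ℓ m ≤ k := dB_le
  have hset : {p : ℕ | 1 ≤ p ∧ p ≤ k ∧
      ∀ i j : Fin k, (i.val : ℤ) - (j.val : ℤ) = (k : ℤ) - (p : ℤ) → m j ≤ ℓ i}
      = Set.Icc 1 (k - dB ℓ m) := by
    ext p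
    simp only [Set.mem_setOf_eq, Set.mem_Icc]
    constructor
    · rintro ⟨h1, hpk, hcond⟩
      refine ⟨h1, ?_⟩
      have hdle : dB ℓ m ≤ k - p := by
        apply Finset.sup_le
        intro j _
        have hjk := j.isLt
        have hck := cnt_le (ℓ := ℓ) (m := m) j
        by_cases hj : j.val < p
        · have hik : j.val + (k - p) < k := by omega
          have hle := hcond ⟨j.val + (k - p), hik⟩ j
            (by show ((j.val + (k - p) : ℕ) : ℤ) - (j.val : ℤ) = (k : ℤ) - (p : ℤ); omega)
          have hlt : m j < ℓ ⟨j.val + (k - p), hik⟩ :=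
            lt_of_le_of_ne hle (fun h => hd _ j h.symm)
          have hfin : cnt ℓ m j ≤ j.val + (k - p) := (cnt_le_iff hℓ hd j _).mp hlt
          omega
        · omega
      omega
    · rintro ⟨h1, hp⟩
      refine ⟨h1, by omega, ?_⟩
      intro i j heq
      have hje : i.val + p = j.val + k := by omega
      have hd1 : cnt ℓ m j - j.val ≤ dB ℓ m := le_dB j
      have hic : cnt ℓ m j ≤ i.val := by omega
      exact ((cnt_le_iff hℓ hd j i).mpr hic).le
  rw [kBeta, hset]
  rcases Nat.eq_zero_or_pos (k - dB ℓ m) with h | h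
  · rw [h, Set.Icc_eq_empty (by omega)]
    simpa using (csSup_empty : sSup (∅ : Set ℕ) = ⊥)
  · exact csSup_Icc h

end NCAux

/-- Disjoint `k`-subsets `ℓ` and `m` are noncrossing if and only if
`α(ℓ,m) + β(ℓ,m) = k`. -/
theorem disjoint_noncrossing_iff (k : ℕ) (hk : 1 ≤ k) (ℓ m : Fin k → ℤ)
    (hℓ : StrictMono ℓ) (hm : StrictMono m)
    (hdisj : Set.range ℓ ∩ Set.range m = ∅) :
    ¬ Crossing k ℓ m ↔ kAlpha k ℓ m + kBeta k ℓ m = k := by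
  classical
  have hd : ∀ i j, ℓ i ≠ m j := by
    intro i j h
    have hmem : ℓ i ∈ (Set.range ℓ ∩ Set.range m) := ⟨⟨i, rfl⟩, ⟨j, h.symm⟩⟩
    rw [hdisj] at hmem
    exact hmem
  have hcle : ∀ j : Fin k, NCAux.cnt ℓ m j ≤ k := fun j => NCAux.cnt_le j
  have hmono : ∀ j₁ j₂ : Fin k, j₁.val ≤ j₂.val → NCAux.cnt ℓ m j₁ ≤ NCAux.cnt ℓ m j₂ :=
    fun j₁ j₂ h => NCAux.cnt_mono hm h
  have hLm : ∀ a : Fin k, ℓ a ∈ Set.range ℓ \ Set.range m := fun a =>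
    ⟨⟨a, rfl⟩, by rintro ⟨j, hj⟩; exact hd a j hj.symm⟩
  have hMl : ∀ b : Fin k, m b ∈ Set.range m \ Set.range ℓ := fun b =>
    ⟨⟨b, rfl⟩, by rintro ⟨i, hi⟩; exact hd i b hi⟩
  have hcross : Crossing k ℓ m ↔ ∃ b₁ b₂ : Fin k,
      NCAux.cnt ℓ m b₁ < NCAux.cnt ℓ m b₂ ∧
      (1 ≤ NCAux.cnt ℓ m b₁ ∨ NCAux.cnt ℓ m b₂ < k) := by
    constructor
    · rintro ⟨i₁, i₂, j₁, j₂, ⟨⟨a₁, rfl⟩, -⟩, ⟨⟨a₂, rfl⟩, -⟩, ⟨⟨b₁, rfl⟩, -⟩,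
        ⟨⟨b₂, rfl⟩, -⟩, hord⟩
      rcases hord with ⟨h1, h2, h3⟩ | ⟨h1, h2, h3⟩
      · -- ℓ a₁ < m b₁ < ℓ a₂ < m b₂
        have e1 := (NCAux.lt_cnt_iff hℓ a₁ b₁).mp h1
        have e2 := (NCAux.cnt_le_iff hℓ hd b₁ a₂).mp h2
        have e3 := (NCAux.lt_cnt_iff hℓ a₂ b₂).mp h3
        exact ⟨b₁, b₂, by omega, Or.inl (by omega)⟩
      · -- m b₁ < ℓ a₁ < m b₂ < ℓ a₂
        have e1 := (NCAux.cnt_le_iff hℓ hd b₁ a₁).mp h1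
        have e2 := (NCAux.lt_cnt_iff hℓ a₁ b₂).mp h2
        have e3 := (NCAux.cnt_le_iff hℓ hd b₂ a₂).mp h3
        have := a₂.isLt
        exact ⟨b₁, b₂, by omega, Or.inr (by omega)⟩
    · rintro ⟨b₁, b₂, hlt, hor⟩
      have hcb2 : NCAux.cnt ℓ m b₂ ≤ k := hcle b₂
      rcases hor with h1 | h1
      · refine ⟨ℓ ⟨NCAux.cnt ℓ m b₁ - 1, by omega⟩, ℓ ⟨NCAux.cnt ℓ m b₁, by omega⟩,
          m b₁, m b₂, hLm _, hLm _, hMl _, hMl _, Or.inl ⟨?_, ?_, ?_⟩⟩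
        · exact (NCAux.lt_cnt_iff hℓ _ b₁).mpr (by show NCAux.cnt ℓ m b₁ - 1 < _; omega)
        · exact (NCAux.cnt_le_iff hℓ hd b₁ _).mpr (by show _ ≤ NCAux.cnt ℓ m b₁; omega)
        · exact (NCAux.lt_cnt_iff hℓ _ b₂).mpr (by show NCAux.cnt ℓ m b₁ < _; omega)
      · refine ⟨ℓ ⟨NCAux.cnt ℓ m b₁, by omega⟩, ℓ ⟨NCAux.cnt ℓ m b₂, by omega⟩,
          m b₁, m b₂, hLm _, hLm _, hMl _, hMl _, Or.inr ⟨?_, ?_, ?_⟩⟩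
        · exact (NCAux.cnt_le_iff hℓ hd b₁ _).mpr (by show _ ≤ NCAux.cnt ℓ m b₁; omega)
        · exact (NCAux.lt_cnt_iff hℓ _ b₂).mpr (by show NCAux.cnt ℓ m b₁ < _; omega)
        · exact (NCAux.cnt_le_iff hℓ hd b₂ _).mpr (by show _ ≤ NCAux.cnt ℓ m b₂; omega)
  rw [NCAux.kAlpha_eq hℓ hd, NCAux.kBeta_eq hℓ hd, hcross]
  have haK : NCAux.dA ℓ m ≤ k := NCAux.dA_le
  have hbK : NCAux.dB ℓ m ≤ k := NCAux.dB_le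
  have hA_ge : ∀ j : Fin k, (j.val + 1) - NCAux.cnt ℓ m j ≤ NCAux.dA ℓ m :=
    fun j => NCAux.le_dA j
  have hB_ge : ∀ j : Fin k, NCAux.cnt ℓ m j - j.val ≤ NCAux.dB ℓ m :=
    fun j => NCAux.le_dB j
  obtain ⟨jA, hjA'⟩ := NCAux.exists_dA (ℓ := ℓ) (m := m) hk
  obtain ⟨jB, hjB'⟩ := NCAux.exists_dB (ℓ := ℓ) (m := m) hk
  have hsum_le : NCAux.dA ℓ m + NCAux.dB ℓ m ≤ k := by
    have h1 := hcle jB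
    have h2 := jA.isLt
    have h3 := jB.isLt
    rcases lt_trichotomy jB.val jA.val with h | h | h
    · have := hmono jB jA h.le
      omega
    · have e1 := hmono jB jA h.le
      have e2 := hmono jA jB h.ge
      omega
    · have := hmono jA jB h.le
      omega
  constructor
  · intro hnc
    have hnc' : ∀ b₁ b₂ : Fin k, NCAux.cnt ℓ m b₁ < NCAux.cnt ℓ m b₂ →
        NCAux.cnt ℓ m b₁ = 0 ∧ NCAux.cnt ℓ m b₂ = k := by
      intro b₁ b₂ h
      by_contra hcon
      exact hnc ⟨b₁, b₂, h, by have := hcle b₂; omega⟩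
    have hj0k : (0 : ℕ) < k := hk
    have hjlk : k - 1 < k := by omega
    rcases eq_or_lt_of_le (hmono ⟨0, hj0k⟩ ⟨k - 1, hjlk⟩ (Nat.zero_le _)) with hcc | hcc
    · have h1 := hA_ge ⟨k - 1, hjlk⟩
      have h2 := hB_ge ⟨0, hj0k⟩
      have h3 := hcle ⟨k - 1, hjlk⟩
      have e1 : (⟨k - 1, hjlk⟩ : Fin k).val = k - 1 := rfl
      have e2 : (⟨0, hj0k⟩ : Fin k).val = 0 := rfl
      omega
    · obtain ⟨h0, hl⟩ := hnc' _ _ hcc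
      have hTne : (Finset.univ.filter fun j : Fin k => NCAux.cnt ℓ m j = 0).Nonempty :=
        ⟨⟨0, hj0k⟩, Finset.mem_filter.mpr ⟨Finset.mem_univ _, h0⟩⟩
      have hbmax := Finset.max'_mem _ hTne
      set bm := (Finset.univ.filter fun j : Fin k => NCAux.cnt ℓ m j = 0).max' hTne with hbm
      have hb0 : NCAux.cnt ℓ m bm = 0 := (Finset.mem_filter.mp hbmax).2
      have hbne : bm.val ≠ k - 1 := by
        intro h
        have : bm = ⟨k - 1, hjlk⟩ := Fin.ext h
        rw [this] at hb0
        omega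
      have hbk := bm.isLt
      have hbsk : bm.val + 1 < k := by omega
      have hbs0 : NCAux.cnt ℓ m ⟨bm.val + 1, hbsk⟩ ≠ 0 := by
        intro h
        have hmem : (⟨bm.val + 1, hbsk⟩ : Fin k) ∈
            (Finset.univ.filter fun j : Fin k => NCAux.cnt ℓ m j = 0) :=
          Finset.mem_filter.mpr ⟨Finset.mem_univ _, h⟩
        have hle := Finset.le_max' _ _ hmem
        rw [← hbm] at hle
        have h2 : bm.val + 1 ≤ bm.val := hle
        omega
      obtain ⟨-, hck⟩ := hnc' bm ⟨bm.val + 1, hbsk⟩ (by omega)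
      have h1 := hA_ge bm
      have h2 := hB_ge ⟨bm.val + 1, hbsk⟩
      have e1 : (⟨bm.val + 1, hbsk⟩ : Fin k).val = bm.val + 1 := rfl
      omega
  · intro hsum
    have hs : NCAux.dA ℓ m + NCAux.dB ℓ m = k := by omega
    rintro ⟨b₁, b₂, hlt, hor⟩
    have hb1k := b₁.isLt
    have hb2k := b₂.isLt
    have hcb1 := hcle b₁
    have hcb2 := hcle b₂
    have hjAk := jA.isLt
    have hjBk := jB.isLt
    have hcjB := hcle jB
    by_cases ht : NCAux.dB ℓ m = 0
    · -- dA = k : c (k-1) = 0 so everything is 0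
      have hkey : jA.val = k - 1 ∧ NCAux.cnt ℓ m jA = 0 := by omega
      have := hmono b₂ jA (by omega)
      omega
    · by_cases hsz : NCAux.dA ℓ m = 0
      · have hkey : NCAux.cnt ℓ m jB = k ∧ jB.val = 0 := by omega
        have := hmono jB b₁ (by omega)
        omega
      · have hcjAle : NCAux.cnt ℓ m jA ≤ jA.val := by omega
        have hcjBgt : jB.val < NCAux.cnt ℓ m jB := by omega
        rcases lt_trichotomy jB.val jA.val with h | h | h
        · have hcc := hmono jB jA h.le
          have hkey : jB.val = 0 ∧ jA.val = k - 1 ∧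
              NCAux.cnt ℓ m jB = NCAux.cnt ℓ m jA := by omega
          have e1 := hmono jB b₁ (by omega)
          have e2 := hmono b₁ jA (by omega)
          have e3 := hmono jB b₂ (by omega)
          have e4 := hmono b₂ jA (by omega)
          omega
        · have e1 := hmono jB jA h.le
          have e2 := hmono jA jB h.ge
          omega
        · have hcc := hmono jA jB h.le
          have hkey : NCAux.cnt ℓ m jA = 0 ∧ NCAux.cnt ℓ m jB = k ∧
              jB.val = jA.val + 1 := by omega
          have hb1 : NCAux.cnt ℓ m b₁ = 0 ∨ NCAux.cnt ℓ m b₁ = k := by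
            rcases le_or_gt b₁.val jA.val with hh | hh
            · have := hmono b₁ jA hh
              omega
            · have := hmono jB b₁ (by omega)
              omega
          have hb2 : NCAux.cnt ℓ m b₂ = 0 ∨ NCAux.cnt ℓ m b₂ = k := by
            rcases le_or_gt b₂.val jA.val with hh | hh
            · have := hmono b₂ jA hh
              omega
            · have := hmono jB b₂ (by omega)
              omega
          omega
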